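/- arXiv:2005.06430 — 6 statements merged into one kernel-verified Lean document; each statement's English description precedes it below -/
import Mathlib

section
/- The function H(x,y,z) = |x|^α · y is a first integral of the vector field Σ_α: if γ : ℝ → ℝ³ is a differentiable curve with γ'(t) = Σ_α(γ(t)) for all t, and the first coordinate of γ never vanishes, then t ↦ H(γ(t)) is constant. -/
/-- `H(x,y,z) = |x|^α · y` is a first integral of `Σ_α(x,y,z) = (xz, -αyz, αy² - x²)`:
along any integral curve whose first coordinate never vanishes, `H` is constant. -/
theorem H_first_integral (α : ℝ) (hα : 0 < α) (x y z : ℝ → ℝ)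
    (hx : ∀ t, HasDerivAt x (x t * z t) t)
    (hy : ∀ t, HasDerivAt y (-α * y t * z t) t)
    (hz : ∀ t, HasDerivAt z (α * (y t) ^ 2 - (x t) ^ 2) t)
    (hx0 : ∀ t, x t ≠ 0) :
    ∀ s t : ℝ, |x s| ^ α * y s = |x t| ^ α * y t := by
  have key : ∀ t, HasDerivAt (fun t => |x t| ^ α * y t) 0 t := by
    intro t
    have habs : HasDerivAt (fun t => |x t|) ((SignType.sign (x t) : ℝ) * (x t * z t)) t :=
      (hasDerivAt_abs (hx0 t)).comp t (hx t)
    have hpow := habs.rpow_const (p := α) (Or.inl (abs_ne_zero.mpr (hx0 t)))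
    have hmul := hpow.mul (hy t)
    have hs : (SignType.sign (x t) : ℝ) * x t = |x t| := by
      rcases (hx0 t).lt_or_gt with h | h
      · simp [h, abs_of_neg h]
      · simp [h, abs_of_pos h]
    have h1 : |x t| ^ (α - 1) * |x t| = |x t| ^ α := by
      rw [← Real.rpow_add_one (abs_ne_zero.mpr (hx0 t))]; ring_nf
    have hd : (SignType.sign (x t) : ℝ) * (x t * z t) * α * |x t| ^ (α - 1) * y t
        + |x t| ^ α * (-α * y t * z t) = 0 := by
      rw [show (SignType.sign (x t) : ℝ) * (x t * z t) = |x t| * z t from by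
        rw [← hs]; ring]
      linear_combination (α * z t * y t) * h1
    rw [← hd]
    exact hmul
  exact fun s t => is_const_of_deriv_eq_zero (fun u => (key u).differentiableAt)
    (fun u => (key u).deriv) s t
end

section
/- Suppose differentiable functions x, y, z, a, b : ℝ → ℝ satisfy x' = -xz, y' = αyz, z' = x² - αy², a' = 2x + az, b' = 2y - αbz with z(0) = a(0) = b(0) = 0. Then a(t)x(t) - αb(t)y(t) = 2z(t) for all t. -/
/-! The quantity `a x - α b y - 2 z` is a first integral of the system: differentiating it,
the terms `a x z` and `α² b y z` cancel and the rest is `2x² - 2αy² - 2z' = 0`.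
It vanishes at `t = 0`, hence everywhere. -/

lemma hasDerivAt_holonomy_defect_eq_zero {α t : ℝ} {x y z a b : ℝ → ℝ}
    (hx : HasDerivAt x (-(x t) * z t) t)
    (hy : HasDerivAt y (α * y t * z t) t)
    (hz : HasDerivAt z ((x t) ^ 2 - α * (y t) ^ 2) t)
    (ha : HasDerivAt a (2 * x t + a t * z t) t)
    (hb : HasDerivAt b (2 * y t - α * b t * z t) t) :
    HasDerivAt (fun s => a s * x s - α * b s * y s - 2 * z s) 0 t :=
  (((ha.mul hx).sub ((hb.const_mul α).mul hy)).sub (hz.const_mul 2)).congr_deriv (by ring)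

/-- If `x' = -xz`, `y' = αyz`, `z' = x² - αy²`, `a' = 2x + az`, `b' = 2y - αbz`
with `z(0) = a(0) = b(0) = 0`, then `a(t)x(t) - αb(t)y(t) = 2z(t)` for all `t`. -/
theorem holonomy_identity (α : ℝ) (x y z a b : ℝ → ℝ)
    (hx : ∀ t, HasDerivAt x (-(x t) * z t) t)
    (hy : ∀ t, HasDerivAt y (α * y t * z t) t)
    (hz : ∀ t, HasDerivAt z ((x t) ^ 2 - α * (y t) ^ 2) t)
    (ha : ∀ t, HasDerivAt a (2 * x t + a t * z t) t)
    (hb : ∀ t, HasDerivAt b (2 * y t - α * b t * z t) t)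
    (hz0 : z 0 = 0) (ha0 : a 0 = 0) (hb0 : b 0 = 0) :
    ∀ t, a t * x t - α * b t * y t = 2 * z t := by
  intro t
  have hderiv t := hasDerivAt_holonomy_defect_eq_zero (hx t) (hy t) (hz t) (ha t) (hb t)
  have hconst := is_const_of_deriv_eq_zero (fun s => (hderiv s).differentiableAt)
    (fun s => (hderiv s).deriv) t 0
  simp only [hz0, ha0, hb0] at hconst
  linarith
end

section
/- Under the same ODE system, if y(t) > 0 for all t, then b(t) = (2/y(t))·∫₀ᵗ y(s)² ds for all t ≥ 0. -/
/-! `y` is an integrating factor for `b' + αz b = 2y`: since `y' = αz y`, the product rule gives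
`(b y)' = 2y²`, and integrating from `0` with `b 0 = 0` yields `b t y t = 2 ∫₀ᵗ y²`. -/

theorem HasDerivAt.mul_integratingFactor {y b : ℝ → ℝ} {c g t : ℝ}
    (hy : HasDerivAt y (c * y t) t) (hb : HasDerivAt b (g - c * b t) t) :
    HasDerivAt (fun s => b s * y s) (g * y t) t :=
  (hb.mul hy).congr_deriv (by ring)

theorem mul_integratingFactor_eq_integral {y b c g : ℝ → ℝ}
    (hy : ∀ t, HasDerivAt y (c t * y t) t) (hb : ∀ t, HasDerivAt b (g t - c t * b t) t)
    (hgy : Continuous fun t => g t * y t) (a t : ℝ) :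
    b t * y t = b a * y a + ∫ s in a..t, g s * y s := by
  rw [intervalIntegral.integral_eq_sub_of_hasDerivAt
    (fun s _ => (hy s).mul_integratingFactor (hb s)) (hgy.intervalIntegrable a t)]
  ring

/-- If `y' = αyz`, `b' = 2y - αbz`, `b(0) = 0`, and `y > 0`, then
`b(t) = (2/y(t)) ∫₀ᵗ y(s)² ds` for all `t ≥ 0`. -/
theorem b_integral_formula (α : ℝ) (y z b : ℝ → ℝ)
    (hy : ∀ t, HasDerivAt y (α * y t * z t) t)
    (hb : ∀ t, HasDerivAt b (2 * y t - α * b t * z t) t)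
    (hb0 : b 0 = 0) (hypos : ∀ t, 0 < y t) :
    ∀ t ≥ (0 : ℝ), b t = (2 / y t) * ∫ s in (0 : ℝ)..t, (y s) ^ 2 := by
  intro t _
  have hy_cont : Continuous y := continuous_iff_continuousAt.2 fun s => (hy s).continuousAt
  have key := mul_integratingFactor_eq_integral (c := fun s => α * z s) (g := fun s => 2 * y s)
    (fun s => (hy s).congr_deriv (by ring)) (fun s => (hb s).congr_deriv (by ring))
    (by fun_prop) 0 t
  have h_int : ∫ s in (0 : ℝ)..t, 2 * y s * y s = 2 * ∫ s in (0 : ℝ)..t, y s ^ 2 := by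
    simp only [mul_assoc, ← sq, intervalIntegral.integral_const_mul]
  rw [hb0, zero_mul, zero_add, h_int] at key
  rw [div_mul_eq_mul_div, ← key, mul_div_cancel_right₀ _ (hypos t).ne']
end

section
/- (Log-convex Hermite–Hadamard) If f : [a,b] → ℝ is positive, continuous, and log-convex with f(a) ≠ f(b), then (1/(b-a))·∫ₐᵇ f(s) ds ≤ (f(b) - f(a))/(log f(b) - log f(a)). -/
/-- Log-convex Hermite–Hadamard: if `f` is positive, continuous and log-convex on `[a,b]`
with `f(a) ≠ f(b)`, then `(1/(b-a)) ∫ₐᵇ f ≤ (f(b) - f(a))/(log f(b) - log f(a))`. -/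
theorem log_convex_hermite_hadamard (a b : ℝ) (hab : a < b) (f : ℝ → ℝ)
    (hpos : ∀ x ∈ Set.Icc a b, 0 < f x)
    (hc : ContinuousOn f (Set.Icc a b))
    (hconv : ConvexOn ℝ (Set.Icc a b) (fun x => Real.log (f x)))
    (hne : f a ≠ f b) :
    (1 / (b - a)) * ∫ x in a..b, f x ≤
      (f b - f a) / (Real.log (f b) - Real.log (f a)) := by
  set A := Real.log (f a) with hA
  set B := Real.log (f b) with hB
  have ha : a ∈ Set.Icc a b := Set.left_mem_Icc.2 hab.le
  have hb : b ∈ Set.Icc a b := Set.right_mem_Icc.2 hab.le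
  have hfa : 0 < f a := hpos a ha
  have hfb : 0 < f b := hpos b hb
  have hefa : Real.exp A = f a := Real.exp_log hfa
  have hefb : Real.exp B = f b := Real.exp_log hfb
  have hAB : A ≠ B := by
    intro h
    apply hne
    rw [← hefa, ← hefb, h]
  have hba : (0:ℝ) < b - a := by linarith
  set c := (B - A) / (b - a) with hcdef
  set d := A - c * a with hddef
  have hc0 : c ≠ 0 := by
    simp only [hcdef]
    exact div_ne_zero (sub_ne_zero.2 (Ne.symm hAB)) (ne_of_gt hba)
  -- pointwise bound: f x ≤ exp (c*x + d)
  have hpt : ∀ x ∈ Set.Icc a b, f x ≤ Real.exp (c * x + d) := by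
    intro x hx
    set t := (x - a) / (b - a) with htdef
    have ht0 : 0 ≤ t := div_nonneg (by linarith [hx.1]) hba.le
    have ht1 : t ≤ 1 := (div_le_one hba).2 (by linarith [hx.2])
    have hxt : (1 - t) • a + t • b = x := by
      simp only [smul_eq_mul, htdef]
      field_simp
      ring
    have hcv := hconv.2 ha hb (by linarith : (0:ℝ) ≤ 1 - t) ht0 (by ring)
    rw [hxt] at hcv
    simp only [smul_eq_mul] at hcv
    have heq : c * x + d = (1 - t) * A + t * B := by
      simp only [hcdef, hddef, htdef]
      field_simp
      ring
    rw [heq]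
    calc f x = Real.exp (Real.log (f x)) := (Real.exp_log (hpos x hx)).symm
      _ ≤ Real.exp ((1 - t) * A + t * B) := Real.exp_le_exp.2 hcv
  -- integrability
  have hif : IntervalIntegrable f MeasureTheory.volume a b := by
    apply ContinuousOn.intervalIntegrable
    rwa [Set.uIcc_of_le hab.le]
  have hig : IntervalIntegrable (fun x => Real.exp (c * x + d)) MeasureTheory.volume a b :=
    (Real.continuous_exp.comp (by continuity)).intervalIntegrable a b
  have hmono : (∫ x in a..b, f x) ≤ ∫ x in a..b, Real.exp (c * x + d) :=
    intervalIntegral.integral_mono_on hab.le hif hig hpt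
  -- compute the integral of the exponential
  have hca : c * a + d = A := by simp [hddef]
  have hcb : c * b + d = B := by
    simp only [hddef, hcdef]
    field_simp
    ring
  have hint : (∫ x in a..b, Real.exp (c * x + d)) = c⁻¹ * (Real.exp B - Real.exp A) := by
    rw [intervalIntegral.integral_comp_mul_add Real.exp hc0 d, hca, hcb,
      integral_exp, smul_eq_mul]
  rw [hint, hefa, hefb] at hmono
  have hfinal : (1 / (b - a)) * (c⁻¹ * (f b - f a)) = (f b - f a) / (B - A) := by
    rw [hcdef]
    field_simp
  calc (1 / (b - a)) * ∫ x in a..b, f x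
      ≤ (1 / (b - a)) * (c⁻¹ * (f b - f a)) := by
        apply mul_le_mul_of_nonneg_left hmono
        positivity
    _ = (f b - f a) / (B - A) := hfinal
end

section
/- (Key positivity step of the Bounding Box Theorem) Let α > 0 and suppose y, z : [0,ρ] → ℝ are differentiable with y > 0 on [0,ρ], y' = αyz, z concave with z(0) = 0 and z > 0 on (0,ρ), and suppose at some t ∈ (0,ρ) that z'(t) > 0 (the region where b'' < 0 and y² is log-convex). Then ∫₀ᵗ y(s)² ds ≤ y(t)³ / y'(t); equivalently b'(t) = 2y(t) - αb(t)z(t) > 0 where b(t) = (2/y(t))∫₀ᵗ y(s)² ds. -/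
/-!
Concavity with `z(0) = 0` gives the chord bound `z(s) ≥ (s/t) z(t) ≥ 0` on `[0,t]`, so
`y²`, whose derivative is `2αzy²`, is increasing there. Hence
`y(t)² - y(0)² ≥ ∫₀ᵗ 2α (z(t)/t) s y(s)² ds ≥ α z(t) ∫₀ᵗ y²`,
the last step being Chebyshev's inequality for the increasing functions `s` and `y²`.
As `y(0) ≠ 0`, this gives `α z(t) ∫₀ᵗ y² < y(t)²`, which is both claims.
-/

open Set intervalIntegral

theorem ConcaveOn.div_mul_le_of_map_zero {D : Set ℝ} {f : ℝ → ℝ} (hf : ConcaveOn ℝ D f)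
    (h0 : 0 ∈ D) (hf0 : f 0 = 0) {s t : ℝ} (ht : t ∈ D) (hs : 0 ≤ s) (hst : s ≤ t) :
    s / t * f t ≤ f s := by
  obtain rfl | htpos := (hs.trans hst).eq_or_lt
  · simp [le_antisymm hst hs, hf0]
  have hchord := hf.2 h0 ht (sub_nonneg.2 (div_le_one_of_le₀ hst htpos.le))
    (div_nonneg hs htpos.le) (sub_add_cancel 1 (s / t))
  simpa [hf0, div_mul_cancel₀ s htpos.ne'] using hchord

/-- Chebyshev's integral inequality for the increasing pair `s ↦ s` and `g`. -/
theorem midpoint_mul_integral_le_integral_mul_of_monotoneOn {g : ℝ → ℝ} {a b : ℝ}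
    (hab : a ≤ b) (hg : MonotoneOn g (Icc a b)) :
    (a + b) / 2 * ∫ s in a..b, g s ≤ ∫ s in a..b, s * g s := by
  set c := (a + b) / 2 with hc_def
  have hc : c ∈ Icc a b := ⟨by linarith, by linarith⟩
  have hgi : IntervalIntegrable g MeasureTheory.volume a b :=
    (uIcc_of_le hab ▸ hg).intervalIntegrable
  have hsgi : IntervalIntegrable (fun s => s * g s) MeasureTheory.volume a b :=
    hgi.continuousOn_mul continuousOn_id
  have hpointwise : ∀ s ∈ Icc a b, 0 ≤ (s - c) * (g s - g c) := by
    intro s hs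
    rcases le_total s c with hsc | hcs
    · exact mul_nonneg_of_nonpos_of_nonpos (sub_nonpos.2 hsc) (sub_nonpos.2 (hg hs hc hsc))
    · exact mul_nonneg (sub_nonneg.2 hcs) (sub_nonneg.2 (hg hc hs hcs))
  have hexpand : ∫ s in a..b, (s - c) * (g s - g c) =
      (∫ s in a..b, s * g s) - c * ∫ s in a..b, g s := by
    have hid : IntervalIntegrable (fun s : ℝ => g c * s) MeasureTheory.volume a b :=
      intervalIntegrable_id.const_mul _
    simp_rw [show ∀ s, (s - c) * (g s - g c) = (s * g s - c * g s) - (g c * s - g c * c) from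
      fun s => by ring]
    rw [integral_sub (hsgi.sub (hgi.const_mul c)) (hid.sub intervalIntegrable_const),
      integral_sub hsgi (hgi.const_mul c), integral_sub hid intervalIntegrable_const,
      integral_const_mul, integral_const_mul, integral_id, integral_const, smul_eq_mul]
    ring
  have hnonneg : 0 ≤ ∫ s in a..b, (s - c) * (g s - g c) := integral_nonneg hab hpointwise
  linarith

theorem mul_integral_sq_lt_sq_of_hasDerivAt {α t : ℝ} {y z : ℝ → ℝ} (hα : 0 ≤ α)
    (ht : 0 < t) (hy : ∀ s ∈ Icc 0 t, HasDerivAt y (α * y s * z s) s) (hy0 : y 0 ≠ 0)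
    (hz : ConcaveOn ℝ (Icc 0 t) z) (hz0 : z 0 = 0) (hzt : 0 ≤ z t) :
    α * z t * ∫ s in 0..t, y s ^ 2 < y t ^ 2 := by
  have hchord : ∀ s ∈ Icc 0 t, s / t * z t ≤ z s := fun s hs =>
    hz.div_mul_le_of_map_zero (left_mem_Icc.2 ht.le) hz0 (right_mem_Icc.2 ht.le) hs.1 hs.2
  have hzs : ∀ s ∈ Icc 0 t, 0 ≤ z s := fun s hs =>
    (mul_nonneg (div_nonneg hs.1 ht.le) hzt).trans (hchord s hs)
  have hsq : ∀ s ∈ Icc 0 t, HasDerivAt (fun s => y s ^ 2) (2 * α * z s * y s ^ 2) s :=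
    fun s hs => ((hy s hs).pow 2).congr_deriv (by push_cast; ring)
  have hcont : ContinuousOn (fun s => y s ^ 2) (Icc 0 t) := fun s hs =>
    (hsq s hs).continuousAt.continuousWithinAt
  have hmono : MonotoneOn (fun s => y s ^ 2) (Icc 0 t) := by
    refine monotoneOn_of_hasDerivWithinAt_nonneg (convex_Icc 0 t) hcont
      (fun s hs => (hsq s (interior_subset hs)).hasDerivWithinAt) fun s hs => ?_
    have hs' := interior_subset hs
    exact mul_nonneg (mul_nonneg (by positivity) (hzs s hs')) (sq_nonneg _)
  have hcheb := midpoint_mul_integral_le_integral_mul_of_monotoneOn ht.le hmono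
  have hftc : ∫ s in 0..t, 2 * α * z t / t * (s * y s ^ 2) ≤ y t ^ 2 - y 0 ^ 2 := by
    refine integral_le_sub_of_hasDeriv_right_of_le ht.le hcont
      (fun s hs => (hsq s (Ioo_subset_Icc_self hs)).hasDerivWithinAt)
      ((continuousOn_const.mul (continuousOn_id.mul hcont)).integrableOn_Icc) fun s hs => ?_
    have hs' := Ioo_subset_Icc_self hs
    calc 2 * α * z t / t * (s * y s ^ 2) = 2 * α * (s / t * z t) * y s ^ 2 := by ring
      _ ≤ 2 * α * z s * y s ^ 2 := by gcongr; exact hchord s hs'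
  rw [integral_const_mul] at hftc
  calc α * z t * ∫ s in 0..t, y s ^ 2
      = 2 * α * z t / t * ((0 + t) / 2 * ∫ s in 0..t, y s ^ 2) := by
        field_simp; ring
    _ ≤ 2 * α * z t / t * ∫ s in 0..t, s * y s ^ 2 := by gcongr
    _ ≤ y t ^ 2 - y 0 ^ 2 := hftc
    _ < y t ^ 2 := by linarith [sq_pos_of_ne_zero hy0]

theorem bounding_box_positivity_general (α ρ : ℝ) (hα : 0 < α) (y z : ℝ → ℝ)
    (hypos : ∀ s ∈ Set.Icc (0 : ℝ) ρ, 0 < y s)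
    (hy : ∀ s ∈ Set.Icc (0 : ℝ) ρ, HasDerivAt y (α * y s * z s) s)
    (hconc : ConcaveOn ℝ (Set.Icc 0 ρ) z)
    (hz0 : z 0 = 0)
    (hzpos : ∀ s ∈ Set.Ioo (0 : ℝ) ρ, 0 < z s)
    (t : ℝ) (ht : t ∈ Set.Ioo (0 : ℝ) ρ) :
    (∫ s in (0 : ℝ)..t, (y s) ^ 2) ≤ (y t) ^ 3 / (α * y t * z t) ∧
    0 < 2 * y t - α * ((2 / y t) * ∫ s in (0 : ℝ)..t, (y s) ^ 2) * z t := by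
  have hsub : Icc 0 t ⊆ Icc 0 ρ := Icc_subset_Icc_right ht.2.le
  have hyt : 0 < y t := hypos t (hsub (right_mem_Icc.2 ht.1.le))
  have hzt : 0 < z t := hzpos t ht
  have hkey := mul_integral_sq_lt_sq_of_hasDerivAt hα.le ht.1 (fun s hs => hy s (hsub hs))
    (hypos 0 (hsub (left_mem_Icc.2 ht.1.le))).ne' (hconc.subset hsub (convex_Icc 0 t)) hz0
    hzt.le
  constructor
  · rw [le_div_iff₀ (by positivity)]
    nlinarith
  · rw [sub_pos, show α * (2 / y t * ∫ s in (0 : ℝ)..t, y s ^ 2) * z t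
      = 2 / y t * (α * z t * ∫ s in (0 : ℝ)..t, y s ^ 2) by ring]
    calc 2 / y t * (α * z t * ∫ s in (0 : ℝ)..t, y s ^ 2) < 2 / y t * y t ^ 2 := by gcongr
      _ = 2 * y t := by field_simp

/-- Key positivity step of the Bounding Box Theorem: under the stated hypotheses
(with `y > 0`, `y' = αyz`, `z` concave, `z(0)=0`, `z > 0` on `(0,ρ)`, and `z' > 0`
on `[0,t]`), one has `∫₀ᵗ y² ≤ y(t)³/y'(t)`; equivalently `b'(t) = 2y(t) - αb(t)z(t) > 0`
where `b(t) = (2/y(t)) ∫₀ᵗ y²`. -/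
theorem bounding_box_positivity (α ρ : ℝ) (hα : 0 < α) (hρ : 0 < ρ) (y z z' : ℝ → ℝ)
    (hypos : ∀ s ∈ Set.Icc (0 : ℝ) ρ, 0 < y s)
    (hy : ∀ s ∈ Set.Icc (0 : ℝ) ρ, HasDerivAt y (α * y s * z s) s)
    (hzd : ∀ s ∈ Set.Icc (0 : ℝ) ρ, HasDerivAt z (z' s) s)
    (hconc : ConcaveOn ℝ (Set.Icc 0 ρ) z)
    (hz0 : z 0 = 0)
    (hzpos : ∀ s ∈ Set.Ioo (0 : ℝ) ρ, 0 < z s)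
    (t : ℝ) (ht : t ∈ Set.Ioo (0 : ℝ) ρ)
    (hz' : ∀ s ∈ Set.Icc (0 : ℝ) t, 0 < z' s) :
    (∫ s in (0 : ℝ)..t, (y s) ^ 2) ≤ (y t) ^ 3 / (α * y t * z t) ∧
    0 < 2 * y t - α * ((2 / y t) * ∫ s in (0 : ℝ)..t, (y s) ^ 2) * z t :=
  bounding_box_positivity_general α ρ hα y z hypos hy hconc hz0 hzpos t ht
end

section
/- For all x₀ with 1/√3 < x₀ < 1, the following rational-algebraic inequality holds: (27x₀⁶ - 36x₀⁴ - 3x₀² + 8(4-3x₀²)^{1/4} + 4)² · (-3x₀² + x₀√(4-3x₀²) + 2)⁴ < 64·√(4-3x₀²) · (-27x₀⁸ + 72x₀⁶ - 57x₀⁴ + 12x₀² + 6x₀√(4-3x₀²) - 9x₀⁷√(4-3x₀²) + 18x₀⁵√(4-3x₀²) - 17x₀³√(4-3x₀²) + 2)². -/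
set_option maxHeartbeats 4000000 in
/-- The rational-algebraic inequality (20) from the paper, for `1/√3 < x₀ < 1`. -/
theorem inequality_twenty (x₀ : ℝ) (h1 : 1 / Real.sqrt 3 < x₀) (h2 : x₀ < 1) :
    (27 * x₀ ^ 6 - 36 * x₀ ^ 4 - 3 * x₀ ^ 2 +
        8 * (4 - 3 * x₀ ^ 2) ^ ((1 : ℝ) / 4) + 4) ^ 2 *
      (-3 * x₀ ^ 2 + x₀ * Real.sqrt (4 - 3 * x₀ ^ 2) + 2) ^ 4 <
    64 * Real.sqrt (4 - 3 * x₀ ^ 2) *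
      (-27 * x₀ ^ 8 + 72 * x₀ ^ 6 - 57 * x₀ ^ 4 + 12 * x₀ ^ 2 +
        6 * x₀ * Real.sqrt (4 - 3 * x₀ ^ 2) -
        9 * x₀ ^ 7 * Real.sqrt (4 - 3 * x₀ ^ 2) +
        18 * x₀ ^ 5 * Real.sqrt (4 - 3 * x₀ ^ 2) -
        17 * x₀ ^ 3 * Real.sqrt (4 - 3 * x₀ ^ 2) + 2) ^ 2 := by
  have hsq3pos : (0:ℝ) < Real.sqrt 3 := Real.sqrt_pos.mpr (by norm_num)
  have hsq3 : Real.sqrt 3 ^ 2 = 3 := Real.sq_sqrt (by norm_num)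
  have hx0 : 0 < x₀ := lt_trans (by positivity) h1
  have h1' : 1 < x₀ * Real.sqrt 3 := by
    rw [div_lt_iff₀ hsq3pos] at h1; linarith
  have h3x : 1 < 3 * x₀ ^ 2 := by nlinarith [h1', hsq3, hsq3pos]
  have hpos : (0:ℝ) < 4 - 3 * x₀ ^ 2 := by nlinarith
  set s := Real.sqrt (4 - 3 * x₀ ^ 2) with hs_def
  set t := (4 - 3 * x₀ ^ 2) ^ ((1 : ℝ) / 4) with ht_def
  have hs2 : s ^ 2 = 4 - 3 * x₀ ^ 2 := Real.sq_sqrt hpos.le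
  have hs0 : 0 < s := Real.sqrt_pos.mpr hpos
  have ht0 : 0 < t := Real.rpow_pos_of_pos hpos _
  have ht2 : t ^ 2 = s := by
    rw [ht_def, hs_def, ← Real.rpow_natCast ((4 - 3 * x₀ ^ 2) ^ ((1:ℝ)/4)) 2,
      ← Real.rpow_mul hpos.le, Real.sqrt_eq_rpow]
    norm_num
  clear_value s t
  clear hs_def ht_def
  have hs1 : 1 < s := by nlinarith [hs2, hs0]
  have hsx : x₀ < s := by nlinarith [hs2, hs0, hx0]
  have ht4 : 2 * t ≤ s + 1 := by nlinarith [sq_nonneg (t - 1), ht2]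
  have ht3 : 2 * s ≤ t * (s + 1) := by
    have hts : t * s = t ^ 3 := by rw [← ht2]; ring
    nlinarith [mul_nonneg ht0.le (sq_nonneg (t - 1)), ht2, hts]
  have hx2 : x₀ ^ 2 < 1 := by nlinarith
  -- abbreviations
  set B := -3 * x₀ ^ 2 + x₀ * s + 2 with hB_def
  set C := -27 * x₀ ^ 8 + 72 * x₀ ^ 6 - 57 * x₀ ^ 4 + 12 * x₀ ^ 2 + 6 * x₀ * s -
      9 * x₀ ^ 7 * s + 18 * x₀ ^ 5 * s - 17 * x₀ ^ 3 * s + 2 with hC_def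
  set P := 27 * x₀ ^ 6 - 36 * x₀ ^ 4 - 3 * x₀ ^ 2 + 4 with hP_def
  set Q := 4 + 9 * x₀ ^ 2 - 9 * x₀ ^ 4 with hQ_def
  set G := -9 * x₀ ^ 4 + 12 * x₀ ^ 2 - 2 - x₀ * s * (3 * x₀ ^ 2 - 2) with hG_def
  set W2 := (12 - 8 * x₀ - 18 * x₀ ^ 3 + 27 * x₀ ^ 4 + 18 * x₀ ^ 5 - 27 * x₀ ^ 6 +
      s * (4 + 10 * x₀ - 30 * x₀ ^ 2 + 21 * x₀ ^ 3 + 18 * x₀ ^ 4 - 27 * x₀ ^ 5)) / 2 with hW2_def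
  set W3 := (8 + 464 * x₀ + 6 * x₀ ^ 2 - 384 * x₀ ^ 3 - 81 * x₀ ^ 4 - 693 * x₀ ^ 5 -
      54 * x₀ ^ 6 + 864 * x₀ ^ 7 + 81 * x₀ ^ 8 - 243 * x₀ ^ 9 +
      s * (56 + 12 * x₀ + 270 * x₀ ^ 2 - 9 * x₀ ^ 3 - 513 * x₀ ^ 4 - 108 * x₀ ^ 5 +
        162 * x₀ ^ 6 + 81 * x₀ ^ 7 + 81 * x₀ ^ 8)) / 2 with hW3_def
  clear_value B C P Q G W2 W3
  have hQpos : 0 < Q := by rw [hQ_def]; nlinarith [hx0, h2, h3x]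
  have hPneg : P < 0 := by
    have hPQ0 : P = -((3 * x₀ ^ 2 - 1) * Q) := by rw [hP_def, hQ_def]; ring
    rw [hPQ0, neg_lt, neg_zero]
    exact mul_pos (by linarith) hQpos
  -- G > 0
  have hL : 0 < 12 * x₀ ^ 2 - 9 * x₀ ^ 4 - 2 := by
    nlinarith [mul_pos (by linarith : (0:ℝ) < 3 * x₀ ^ 2 - 1) (by linarith : (0:ℝ) < 1 - x₀ ^ 2)]
  have hG : 0 < G := by
    rcases le_or_gt (3 * x₀ ^ 2 - 2) 0 with hcase | hcase
    · have ha : x₀ * s * (3 * x₀ ^ 2 - 2) ≤ 0 :=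
        mul_nonpos_of_nonneg_of_nonpos (mul_pos hx0 hs0).le hcase
      rw [hG_def]; linarith
    · have ha : 0 < x₀ * s * (3 * x₀ ^ 2 - 2) := mul_pos (mul_pos hx0 hs0) hcase
      have hsq : (x₀ * s * (3 * x₀ ^ 2 - 2)) ^ 2 =
          x₀ ^ 2 * (4 - 3 * x₀ ^ 2) * (3 * x₀ ^ 2 - 2) ^ 2 := by
        rw [mul_pow, mul_pow, hs2]
      have haux : 0 < 4 * (1 - x₀ ^ 2) * (3 * x₀ ^ 2 - 1) * (12 * x₀ ^ 2 - 9 * x₀ ^ 4 - 1) := by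
        have h1a : (0:ℝ) < 1 - x₀ ^ 2 := by linarith
        have h2a : (0:ℝ) < 3 * x₀ ^ 2 - 1 := by linarith
        have h3a : (0:ℝ) < 12 * x₀ ^ 2 - 9 * x₀ ^ 4 - 1 := by linarith
        positivity
      rw [hG_def]
      nlinarith [hL, ha, hsq, haux]
  -- W2 > 0
  have hU1 : (0:ℝ) < 8 + 9 * x₀ - 6 * x₀ ^ 2 - (9/2) * x₀ ^ 3 + 18 * x₀ ^ 4 + (27/2) * x₀ ^ 5 := by
    have h01 : (0:ℝ) < 1 - x₀ := by linarith
    have hrw : 8 + 9 * x₀ - 6 * x₀ ^ 2 - (9/2) * x₀ ^ 3 + 18 * x₀ ^ 4 + (27/2) * x₀ ^ 5 = 8 * (1 - x₀) ^ 5 + 49 * x₀ ^ 1 * (1 - x₀) ^ 4 + 110 * x₀ ^ 2 * (1 - x₀) ^ 3 + (223/2) * x₀ ^ 3 * (1 - x₀) ^ 2 + 67 * x₀ ^ 4 * (1 - x₀) ^ 1 + 38 * x₀ ^ 5 := by ring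
    rw [hrw]
    linarith [mul_pos (pow_pos hx0 1) (pow_pos h01 4), mul_pos (pow_pos hx0 2) (pow_pos h01 3), mul_pos (pow_pos hx0 3) (pow_pos h01 2), mul_pos (pow_pos hx0 4) (pow_pos h01 1), pow_pos h01 8, pow_pos hx0 8, pow_pos h01 5, pow_pos hx0 5, pow_pos h01 6, pow_pos hx0 6, pow_pos h01 4, pow_pos hx0 4]
  have hU2 : (0:ℝ) < 22 + 39 * x₀ - 42 * x₀ ^ 2 - (45/2) * x₀ ^ 3 + (189/2) * x₀ ^ 4 +
      (27/2) * x₀ ^ 5 - (81/2) * x₀ ^ 6 := by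
    have h01 : (0:ℝ) < 1 - x₀ := by linarith
    have hrw : 22 + 39 * x₀ - 42 * x₀ ^ 2 - (45/2) * x₀ ^ 3 + (189/2) * x₀ ^ 4 +
      (27/2) * x₀ ^ 5 - (81/2) * x₀ ^ 6 = 22 * (1 - x₀) ^ 6 + 171 * x₀ ^ 1 * (1 - x₀) ^ 5 + 483 * x₀ ^ 2 * (1 - x₀) ^ 4 + (1279/2) * x₀ ^ 3 * (1 - x₀) ^ 3 + 495 * x₀ ^ 4 * (1 - x₀) ^ 2 + 294 * x₀ ^ 5 * (1 - x₀) ^ 1 + 64 * x₀ ^ 6 := by ring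
    rw [hrw]
    linarith [mul_pos (pow_pos hx0 1) (pow_pos h01 5), mul_pos (pow_pos hx0 2) (pow_pos h01 4), mul_pos (pow_pos hx0 3) (pow_pos h01 3), mul_pos (pow_pos hx0 4) (pow_pos h01 2), mul_pos (pow_pos hx0 5) (pow_pos h01 1), pow_pos h01 8, pow_pos hx0 8, pow_pos h01 5, pow_pos hx0 5, pow_pos h01 6, pow_pos hx0 6, pow_pos h01 4, pow_pos hx0 4]
  have hW2 : 0 < W2 := by
    rcases le_or_gt 0 (4 + 10 * x₀ - 30 * x₀ ^ 2 + 21 * x₀ ^ 3 + 18 * x₀ ^ 4 - 27 * x₀ ^ 5) with hw21 | hw21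
    · have hle : (4 + 10 * x₀ - 30 * x₀ ^ 2 + 21 * x₀ ^ 3 + 18 * x₀ ^ 4 - 27 * x₀ ^ 5) ≤
          s * (4 + 10 * x₀ - 30 * x₀ ^ 2 + 21 * x₀ ^ 3 + 18 * x₀ ^ 4 - 27 * x₀ ^ 5) :=
        le_mul_of_one_le_left hw21 hs1.le
      have hsum : (0:ℝ) < (1 - x₀) * (8 + 9 * x₀ - 6 * x₀ ^ 2 - (9/2) * x₀ ^ 3 + 18 * x₀ ^ 4 +
          (27/2) * x₀ ^ 5) := mul_pos (by linarith) hU1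
      rw [hW2_def]; nlinarith [hle, hsum]
    · have hs5 : 2 * s ≤ 5 - 3 * x₀ ^ 2 := by nlinarith [sq_nonneg (s - 1), hs2]
      have hle : (5 - 3 * x₀ ^ 2) / 2 * (4 + 10 * x₀ - 30 * x₀ ^ 2 + 21 * x₀ ^ 3 + 18 * x₀ ^ 4 - 27 * x₀ ^ 5) ≤
          s * (4 + 10 * x₀ - 30 * x₀ ^ 2 + 21 * x₀ ^ 3 + 18 * x₀ ^ 4 - 27 * x₀ ^ 5) := by
        apply mul_le_mul_of_nonpos_right _ hw21.le
        linarith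
      have hV : (0:ℝ) < (1 - x₀) * (22 + 39 * x₀ - 42 * x₀ ^ 2 - (45/2) * x₀ ^ 3 + (189/2) * x₀ ^ 4 +
          (27/2) * x₀ ^ 5 - (81/2) * x₀ ^ 6) := mul_pos (by linarith) hU2
      rw [hW2_def]; nlinarith [hle, hV]
  -- W3 > 0
  have hw31 : 0 < 56 + 12 * x₀ + 270 * x₀ ^ 2 - 9 * x₀ ^ 3 - 513 * x₀ ^ 4 - 108 * x₀ ^ 5 +
      162 * x₀ ^ 6 + 81 * x₀ ^ 7 + 81 * x₀ ^ 8 := by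
    have h01 : (0:ℝ) < 1 - x₀ := by linarith
    have hrw : 56 + 12 * x₀ + 270 * x₀ ^ 2 - 9 * x₀ ^ 3 - 513 * x₀ ^ 4 - 108 * x₀ ^ 5 +
      162 * x₀ ^ 6 + 81 * x₀ ^ 7 + 81 * x₀ ^ 8 = 56 * (1 - x₀) ^ 8 + 460 * x₀ ^ 1 * (1 - x₀) ^ 7 + 1922 * x₀ ^ 2 * (1 - x₀) ^ 6 + 4999 * x₀ ^ 3 * (1 - x₀) ^ 5 + 7832 * x₀ ^ 4 * (1 - x₀) ^ 4 + 6706 * x₀ ^ 5 * (1 - x₀) ^ 3 + 2540 * x₀ ^ 6 * (1 - x₀) ^ 2 + 136 * x₀ ^ 7 * (1 - x₀) ^ 1 + 32 * x₀ ^ 8 := by ring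
    rw [hrw]
    linarith [mul_pos (pow_pos hx0 1) (pow_pos h01 7), mul_pos (pow_pos hx0 2) (pow_pos h01 6), mul_pos (pow_pos hx0 3) (pow_pos h01 5), mul_pos (pow_pos hx0 4) (pow_pos h01 4), mul_pos (pow_pos hx0 5) (pow_pos h01 3), mul_pos (pow_pos hx0 6) (pow_pos h01 2), mul_pos (pow_pos hx0 7) (pow_pos h01 1), pow_pos h01 8, pow_pos hx0 8, pow_pos h01 5, pow_pos hx0 5, pow_pos h01 6, pow_pos hx0 6, pow_pos h01 4, pow_pos hx0 4]
  have hU3 : (0:ℝ) < 32 + 270 * x₀ + 408 * x₀ ^ 2 + (423/2) * x₀ ^ 3 - (171/2) * x₀ ^ 4 -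
      486 * x₀ ^ 5 - 432 * x₀ ^ 6 + (81/2) * x₀ ^ 7 + (243/2) * x₀ ^ 8 := by
    have h01 : (0:ℝ) < 1 - x₀ := by linarith
    have hrw : 32 + 270 * x₀ + 408 * x₀ ^ 2 + (423/2) * x₀ ^ 3 - (171/2) * x₀ ^ 4 -
      486 * x₀ ^ 5 - 432 * x₀ ^ 6 + (81/2) * x₀ ^ 7 + (243/2) * x₀ ^ 8 = 32 * (1 - x₀) ^ 8 + 526 * x₀ ^ 1 * (1 - x₀) ^ 7 + 3194 * x₀ ^ 2 * (1 - x₀) ^ 6 + (20243/2) * x₀ ^ 3 * (1 - x₀) ^ 5 + 18782 * x₀ ^ 4 * (1 - x₀) ^ 4 + 20689 * x₀ ^ 5 * (1 - x₀) ^ 3 + 12398 * x₀ ^ 6 * (1 - x₀) ^ 2 + 3028 * x₀ ^ 7 * (1 - x₀) ^ 1 + 80 * x₀ ^ 8 := by ring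
    rw [hrw]
    linarith [mul_pos (pow_pos hx0 1) (pow_pos h01 7), mul_pos (pow_pos hx0 2) (pow_pos h01 6), mul_pos (pow_pos hx0 3) (pow_pos h01 5), mul_pos (pow_pos hx0 4) (pow_pos h01 4), mul_pos (pow_pos hx0 5) (pow_pos h01 3), mul_pos (pow_pos hx0 6) (pow_pos h01 2), mul_pos (pow_pos hx0 7) (pow_pos h01 1), pow_pos h01 8, pow_pos hx0 8, pow_pos h01 5, pow_pos hx0 5, pow_pos h01 6, pow_pos hx0 6, pow_pos h01 4, pow_pos hx0 4]
  have hW3 : 0 < W3 := by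
    have hle : (56 + 12 * x₀ + 270 * x₀ ^ 2 - 9 * x₀ ^ 3 - 513 * x₀ ^ 4 - 108 * x₀ ^ 5 +
        162 * x₀ ^ 6 + 81 * x₀ ^ 7 + 81 * x₀ ^ 8) <
        s * (56 + 12 * x₀ + 270 * x₀ ^ 2 - 9 * x₀ ^ 3 - 513 * x₀ ^ 4 - 108 * x₀ ^ 5 +
        162 * x₀ ^ 6 + 81 * x₀ ^ 7 + 81 * x₀ ^ 8) := by
      nlinarith [mul_pos (by linarith : (0:ℝ) < s - 1) hw31]
    have hsum : (0:ℝ) < (1 - x₀) * (32 + 270 * x₀ + 408 * x₀ ^ 2 + (423/2) * x₀ ^ 3 - (171/2) * x₀ ^ 4 -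
        486 * x₀ ^ 5 - 432 * x₀ ^ 6 + (81/2) * x₀ ^ 7 + (243/2) * x₀ ^ 8) :=
      mul_pos (by linarith) hU3
    rw [hW3_def]; nlinarith [hle, hsum]
  -- identities
  have id2 : Q * B ^ 2 - 4 * (s + 1) * (1 - x₀ ^ 2) * G = (s - x₀) ^ 2 * W2 := by
    rw [hQ_def, hB_def, hG_def, hW2_def]
    linear_combination (-6 - 2*s - 5*x₀*s + 14*x₀^2 + 15*x₀^2*s - x₀^3 - (21/2)*x₀^3*s +
      (33/2)*x₀^4 - 9*x₀^4*s - 3*x₀^5 + (27/2)*x₀^5*s - (45/2)*x₀^6) * hs2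
  have id3 : 16 * s * (C + B ^ 2) + P * B ^ 2 * (s + 1) = (s - x₀) ^ 2 * W3 := by
    rw [hC_def, hB_def, hP_def, hW3_def]
    linear_combination (-4 - 28*s - 6*x₀*s + 13*x₀^2 - 115*x₀^2*s + 58*x₀^3 + (9/2)*x₀^3*s +
      (57/2)*x₀^4 + (507/2)*x₀^4*s - (9/2)*x₀^5 + 54*x₀^5*s - 117*x₀^6 - 117*x₀^6*s -
      90*x₀^7 - (81/2)*x₀^7*s + (135/2)*x₀^8 - (27/2)*x₀^8*s + (81/2)*x₀^9) * hs2
  have id4 : C - B ^ 2 + (3 * x₀ ^ 2 - 1) * ((1 - x₀ ^ 2) * G) = 0 := by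
    rw [hC_def, hB_def, hG_def]
    linear_combination (-x₀^2) * hs2
  -- upper bound : (P + 8t) B^2 < 8 t C
  have k1 : 4 * (s + 1) * (1 - x₀ ^ 2) * G < Q * B ^ 2 := by
    nlinarith [id2, mul_pos (pow_pos (by linarith : (0:ℝ) < s - x₀) 2) hW2]
  have hxG : 0 ≤ (1 - x₀ ^ 2) * G := mul_nonneg (by linarith) hG.le
  have k2 : 8 * t * ((1 - x₀ ^ 2) * G) ≤ 4 * (s + 1) * ((1 - x₀ ^ 2) * G) := by
    apply mul_le_mul_of_nonneg_right _ hxG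
    linarith
  have key : 0 < (3 * x₀ ^ 2 - 1) * (Q * B ^ 2 - 8 * t * ((1 - x₀ ^ 2) * G)) := by
    apply mul_pos (by linarith)
    nlinarith [k1, k2]
  have f2t : 8 * t * (C - B ^ 2 + (3 * x₀ ^ 2 - 1) * ((1 - x₀ ^ 2) * G)) = 0 := by
    rw [id4, mul_zero]
  have hPQ : (P + (3 * x₀ ^ 2 - 1) * Q) * B ^ 2 = 0 := by
    rw [hP_def, hQ_def]; ring
  have expand : 8 * t * C - (P + 8 * t) * B ^ 2 =
      (3 * x₀ ^ 2 - 1) * (Q * B ^ 2 - 8 * t * ((1 - x₀ ^ 2) * G)) +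
      8 * t * (C - B ^ 2 + (3 * x₀ ^ 2 - 1) * ((1 - x₀ ^ 2) * G)) -
      (P + (3 * x₀ ^ 2 - 1) * Q) * B ^ 2 := by ring
  have hup : (P + 8 * t) * B ^ 2 < 8 * t * C := by linarith [expand, f2t, key, hPQ]
  -- lower bound
  have hsqW3 : 0 < (s - x₀) ^ 2 * W3 :=
    mul_pos (pow_pos (by linarith : (0:ℝ) < s - x₀) 2) hW3
  have hPB : 0 ≤ -P * B ^ 2 * (s + 1) :=
    mul_nonneg (mul_nonneg (by linarith) (sq_nonneg _)) (by linarith)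
  have h16 : 0 < 16 * s * (C + B ^ 2) := by linarith [id3, hsqW3, hPB]
  have hCB : 0 < C + B ^ 2 := by
    by_contra hc
    push_neg at hc
    exact absurd h16 (not_lt.2 (mul_nonpos_of_nonneg_of_nonpos (by positivity) hc))
  have hmul : 2 * s * (C + B ^ 2) ≤ t * (s + 1) * (C + B ^ 2) :=
    mul_le_mul_of_nonneg_right ht3 hCB.le
  have step : 0 < ((P + 8 * t) * B ^ 2 + 8 * t * C) * (s + 1) := by
    linarith [id3, hsqW3, hmul]
  have hlow : -(8 * t * C) < (P + 8 * t) * B ^ 2 := by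
    by_contra hc
    push_neg at hc
    have hX : (P + 8 * t) * B ^ 2 + 8 * t * C ≤ 0 := by linarith
    exact absurd step (not_lt.2 (mul_nonpos_of_nonpos_of_nonneg hX (by linarith)))
  -- finish
  have gr : 64 * s * C ^ 2 = (8 * t * C) ^ 2 := by rw [← ht2]; ring
  calc (27 * x₀ ^ 6 - 36 * x₀ ^ 4 - 3 * x₀ ^ 2 + 8 * t + 4) ^ 2 * B ^ 4
      = ((P + 8 * t) * B ^ 2) ^ 2 := by rw [hP_def]; ring
    _ < (8 * t * C) ^ 2 := sq_lt_sq' hlow hup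
    _ = 64 * s * C ^ 2 := gr.symm
end
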